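/- arXiv:2108.12861 — 2 statements merged into one kernel-verified Lean document; each statement's English description precedes it below -/
import Mathlib

section
/- Consider the seven points o = (0,0), a₁ = (4,0), a₃ = (0,4), c₂ = (2, 6 − 2√2), d₁ = (6 − 2√2, 2), u = a₁ + c₂ = (6, 6 − 2√2), and v = a₃ + d₁ = (6 − 2√2, 6) in ℝ². Then each of the eleven pairs (o,a₁), (o,a₃), (o,c₂), (o,d₁), (a₁,c₂), (a₃,d₁), (a₁,u), (c₂,u), (a₃,v), (d₁,v), (u,v) is at C₈-unit distance, and there is no coloring f of the seven points with 3 colors giving distinct colors to the two points of each of these eleven pairs. That is, the Moser spindle embeds as a unit-distance graph in the regular octagon metric. -/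
lemma fin3_tri : ∀ a b d u : Fin 3, a ≠ b → a ≠ d → b ≠ d → b ≠ u → d ≠ u → u = a := by
  have h : ∀ a b d u : Fin 3, ¬(a ≠ b ∧ a ≠ d ∧ b ≠ d ∧ b ≠ u ∧ d ≠ u ∧ u ≠ a) := by decide
  intro a b d u h1 h2 h3 h4 h5
  by_contra h6
  exact h a b d u ⟨h1, h2, h3, h4, h5, h6⟩

noncomputable section

/-- The regular octagon: convex hull of its eight vertices. -/
def C8 : Set (ℝ × ℝ) :=
  convexHull ℝ
    {(4, 0), (2 * Real.sqrt 2, 2 * Real.sqrt 2), (0, 4),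
     (-(2 * Real.sqrt 2), 2 * Real.sqrt 2), (-4, 0),
     (-(2 * Real.sqrt 2), -(2 * Real.sqrt 2)), (0, -4),
     (2 * Real.sqrt 2, -(2 * Real.sqrt 2))}

/-- The seven vertices of the Moser spindle in the regular octagon metric. -/
def mo : ℝ × ℝ := (0, 0)
def ma1 : ℝ × ℝ := (4, 0)
def ma3 : ℝ × ℝ := (0, 4)
def mc2 : ℝ × ℝ := (2, 6 - 2 * Real.sqrt 2)
def md1 : ℝ × ℝ := (6 - 2 * Real.sqrt 2, 2)
def mu : ℝ × ℝ := (6, 6 - 2 * Real.sqrt 2)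
def mv : ℝ × ℝ := (6 - 2 * Real.sqrt 2, 6)

/-- The vertex set of the octagon. -/
def V8 : Set (ℝ × ℝ) :=
  {(4, 0), (2 * Real.sqrt 2, 2 * Real.sqrt 2), (0, 4),
   (-(2 * Real.sqrt 2), 2 * Real.sqrt 2), (-4, 0),
   (-(2 * Real.sqrt 2), -(2 * Real.sqrt 2)), (0, -4),
   (2 * Real.sqrt 2, -(2 * Real.sqrt 2))}

lemma C8_eq : C8 = convexHull ℝ V8 := rfl

lemma sqrt2_sq : Real.sqrt 2 * Real.sqrt 2 = 2 := Real.mul_self_sqrt (by norm_num)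
lemma sqrt2_nn : (0:ℝ) ≤ Real.sqrt 2 := Real.sqrt_nonneg 2
lemma sqrt2_lt : Real.sqrt 2 < 1.5 := by nlinarith [sqrt2_sq, sqrt2_nn]
lemma sqrt2_gt : (1.4:ℝ) < Real.sqrt 2 := by nlinarith [sqrt2_sq, sqrt2_nn]

lemma gauge_eq_one_aux {V : Set (ℝ × ℝ)} {x : ℝ × ℝ} (a b : ℝ)
    (hv : ∀ y ∈ V, a * y.1 + b * y.2 ≤ 1)
    (hx : a * x.1 + b * x.2 = 1) (hxs : x ∈ convexHull ℝ V) :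
    gauge (convexHull ℝ V) x = 1 := by
  have hlin : IsLinearMap ℝ (fun p : ℝ × ℝ => a * p.1 + b * p.2) :=
    ⟨fun p q => by simp [Prod.fst_add, Prod.snd_add]; ring,
     fun c p => by simp [Prod.smul_fst, Prod.smul_snd, smul_eq_mul]; ring⟩
  have hhull : ∀ y ∈ convexHull ℝ V, a * y.1 + b * y.2 ≤ 1 :=
    fun y hy => convexHull_min hv (convex_halfSpace_le hlin 1) hy
  refine le_antisymm (gauge_le_one_of_mem hxs) ?_
  rw [gauge]
  refine le_csInf ⟨1, one_pos, Set.mem_smul_set.2 ⟨x, hxs, one_smul ℝ x⟩⟩ ?_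
  rintro r ⟨hr, y, hy, rfl⟩
  have h1 := hhull y hy
  have h2 : a * (r • y).1 + b * (r • y).2 = r * (a * y.1 + b * y.2) := by
    simp [Prod.smul_fst, Prod.smul_snd, smul_eq_mul]; ring
  nlinarith [hx, h1, h2, hr]

/-- Check a linear functional ≤ 1 on all eight vertices. -/
lemma hv_check (a b : ℝ)
    (h1 : a * 4 ≤ 1) (h2 : a * (2*Real.sqrt 2) + b * (2*Real.sqrt 2) ≤ 1)
    (h3 : b * 4 ≤ 1) (h4 : a * (-(2*Real.sqrt 2)) + b * (2*Real.sqrt 2) ≤ 1)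
    (h5 : a * (-4) ≤ 1) (h6 : a * (-(2*Real.sqrt 2)) + b * (-(2*Real.sqrt 2)) ≤ 1)
    (h7 : b * (-4) ≤ 1) (h8 : a * (2*Real.sqrt 2) + b * (-(2*Real.sqrt 2)) ≤ 1) :
    ∀ y ∈ V8, a * y.1 + b * y.2 ≤ 1 := by
  intro y hy
  simp only [V8, Set.mem_insert_iff, Set.mem_singleton_iff] at hy
  rcases hy with rfl|rfl|rfl|rfl|rfl|rfl|rfl|rfl <;> simp <;> linarith

lemma vmem (v : ℝ × ℝ) (hv : v ∈ V8) : v ∈ convexHull ℝ V8 :=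
  subset_convexHull ℝ V8 hv

-- the six distinct difference vectors
lemma gA : gauge C8 ((-4 : ℝ), (0:ℝ)) = 1 := by
  rw [C8_eq]
  refine gauge_eq_one_aux (-(1/4)) 0 ?_ (by norm_num) (vmem _ (by simp [V8]))
  refine hv_check _ _ (by norm_num) ?_ (by norm_num) ?_ (by norm_num) ?_ (by norm_num) ?_ <;>
    nlinarith [sqrt2_sq, sqrt2_nn, sqrt2_lt, sqrt2_gt]

lemma gB : gauge C8 ((0:ℝ), (-4 : ℝ)) = 1 := by
  rw [C8_eq]
  refine gauge_eq_one_aux 0 (-(1/4)) ?_ (by norm_num) (vmem _ (by simp [V8]))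
  refine hv_check _ _ (by norm_num) ?_ (by norm_num) ?_ (by norm_num) ?_ (by norm_num) ?_ <;>
    nlinarith [sqrt2_sq, sqrt2_nn, sqrt2_lt, sqrt2_gt]

lemma gG : gauge C8 ((2*Real.sqrt 2), (-(2*Real.sqrt 2))) = 1 := by
  rw [C8_eq]
  refine gauge_eq_one_aux (Real.sqrt 2/8) (-(Real.sqrt 2/8)) ?_
    (by nlinarith [sqrt2_sq]) (vmem _ (by simp [V8]))
  refine hv_check _ _ ?_ ?_ ?_ ?_ ?_ ?_ ?_ ?_ <;>
    nlinarith [sqrt2_sq, sqrt2_nn, sqrt2_lt, sqrt2_gt]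

-- edge points: membership via a segment between two adjacent vertices
lemma seg_mem {p q x : ℝ × ℝ} (hp : p ∈ V8) (hq : q ∈ V8) (t : ℝ)
    (ht0 : 0 ≤ t) (ht1 : t ≤ 1)
    (hx1 : t * p.1 + (1 - t) * q.1 = x.1) (hx2 : t * p.2 + (1 - t) * q.2 = x.2) :
    x ∈ convexHull ℝ V8 := by
  refine segment_subset_convexHull hp hq ⟨t, 1 - t, ht0, by linarith, by ring, ?_⟩
  apply Prod.ext <;>
    simpa [Prod.smul_fst, Prod.smul_snd, smul_eq_mul, Prod.fst_add, Prod.snd_add]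
      using (by assumption)

lemma gC : gauge C8 ((-2 : ℝ), 2*Real.sqrt 2 - 6) = 1 := by
  rw [C8_eq]
  refine gauge_eq_one_aux ((1 - Real.sqrt 2)/4) (-(1/4)) ?_ (by ring)
    (seg_mem (p := ((0:ℝ), (-4:ℝ))) (q := (-(2*Real.sqrt 2), -(2*Real.sqrt 2)))
      (by simp [V8]) (by simp [V8]) (1 - Real.sqrt 2/2)
      (by nlinarith [sqrt2_lt, sqrt2_nn]) (by nlinarith [sqrt2_nn])
      (by nlinarith [sqrt2_sq]) (by nlinarith [sqrt2_sq]))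
  refine hv_check _ _ ?_ ?_ ?_ ?_ ?_ ?_ ?_ ?_ <;>
    nlinarith [sqrt2_sq, sqrt2_nn, sqrt2_lt, sqrt2_gt]

lemma gD : gauge C8 (2*Real.sqrt 2 - 6, (-2 : ℝ)) = 1 := by
  rw [C8_eq]
  refine gauge_eq_one_aux (-(1/4)) ((1 - Real.sqrt 2)/4) ?_ (by ring)
    (seg_mem (p := ((-4:ℝ), (0:ℝ))) (q := (-(2*Real.sqrt 2), -(2*Real.sqrt 2)))
      (by simp [V8]) (by simp [V8]) (1 - Real.sqrt 2/2)
      (by nlinarith [sqrt2_lt, sqrt2_nn]) (by nlinarith [sqrt2_nn])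
      (by nlinarith [sqrt2_sq]) (by nlinarith [sqrt2_sq]))
  refine hv_check _ _ ?_ ?_ ?_ ?_ ?_ ?_ ?_ ?_ <;>
    nlinarith [sqrt2_sq, sqrt2_nn, sqrt2_lt, sqrt2_gt]

lemma gE : gauge C8 ((2 : ℝ), 2*Real.sqrt 2 - 6) = 1 := by
  rw [C8_eq]
  refine gauge_eq_one_aux ((Real.sqrt 2 - 1)/4) (-(1/4)) ?_ (by ring)
    (seg_mem (p := ((0:ℝ), (-4:ℝ))) (q := (2*Real.sqrt 2, -(2*Real.sqrt 2)))
      (by simp [V8]) (by simp [V8]) (1 - Real.sqrt 2/2)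
      (by nlinarith [sqrt2_lt, sqrt2_nn]) (by nlinarith [sqrt2_nn])
      (by nlinarith [sqrt2_sq]) (by nlinarith [sqrt2_sq]))
  refine hv_check _ _ ?_ ?_ ?_ ?_ ?_ ?_ ?_ ?_ <;>
    nlinarith [sqrt2_sq, sqrt2_nn, sqrt2_lt, sqrt2_gt]

lemma gF : gauge C8 (2*Real.sqrt 2 - 6, (2 : ℝ)) = 1 := by
  rw [C8_eq]
  refine gauge_eq_one_aux (-(1/4)) ((Real.sqrt 2 - 1)/4) ?_ (by ring)
    (seg_mem (p := ((-4:ℝ), (0:ℝ))) (q := (-(2*Real.sqrt 2), 2*Real.sqrt 2))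
      (by simp [V8]) (by simp [V8]) (1 - Real.sqrt 2/2)
      (by nlinarith [sqrt2_lt, sqrt2_nn]) (by nlinarith [sqrt2_nn])
      (by nlinarith [sqrt2_sq]) (by nlinarith [sqrt2_sq]))
  refine hv_check _ _ ?_ ?_ ?_ ?_ ?_ ?_ ?_ ?_ <;>
    nlinarith [sqrt2_sq, sqrt2_nn, sqrt2_lt, sqrt2_gt]

theorem moser_spindle_in_octagon_metric :
    (mu = ma1 + mc2 ∧ mv = ma3 + md1) ∧
    (gauge C8 (mo - ma1) = 1 ∧ gauge C8 (mo - ma3) = 1 ∧ gauge C8 (mo - mc2) = 1 ∧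
     gauge C8 (mo - md1) = 1 ∧ gauge C8 (ma1 - mc2) = 1 ∧ gauge C8 (ma3 - md1) = 1 ∧
     gauge C8 (ma1 - mu) = 1 ∧ gauge C8 (mc2 - mu) = 1 ∧ gauge C8 (ma3 - mv) = 1 ∧
     gauge C8 (md1 - mv) = 1 ∧ gauge C8 (mu - mv) = 1) ∧
    ¬ ∃ f : ℝ × ℝ → Fin 3,
        f mo ≠ f ma1 ∧ f mo ≠ f ma3 ∧ f mo ≠ f mc2 ∧ f mo ≠ f md1 ∧
        f ma1 ≠ f mc2 ∧ f ma3 ≠ f md1 ∧ f ma1 ≠ f mu ∧ f mc2 ≠ f mu ∧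
        f ma3 ≠ f mv ∧ f md1 ≠ f mv ∧ f mu ≠ f mv := by
  refine ⟨⟨by simp only [mu, ma1, mc2, Prod.mk_add_mk, Prod.mk.injEq]; constructor <;> ring, by simp only [mv, ma3, md1, Prod.mk_add_mk, Prod.mk.injEq]; constructor <;> ring⟩,
    ⟨?_, ?_, ?_, ?_, ?_, ?_, ?_, ?_, ?_, ?_, ?_⟩, ?_⟩
  · have e : mo - ma1 = ((-4 : ℝ), (0:ℝ)) := by simp only [mo, ma1, Prod.mk_sub_mk, Prod.mk_add_mk, Prod.mk.injEq]; constructor <;> ring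
    rw [e]; exact gA
  · have e : mo - ma3 = ((0:ℝ), (-4 : ℝ)) := by simp only [mo, ma3, Prod.mk_sub_mk, Prod.mk_add_mk, Prod.mk.injEq]; constructor <;> ring
    rw [e]; exact gB
  · have e : mo - mc2 = ((-2 : ℝ), 2*Real.sqrt 2 - 6) := by
      simp only [mo, mc2, Prod.mk_sub_mk, Prod.mk_add_mk, Prod.mk.injEq]; constructor <;> ring
    rw [e]; exact gC
  · have e : mo - md1 = (2*Real.sqrt 2 - 6, (-2 : ℝ)) := by
      simp only [mo, md1, Prod.mk_sub_mk, Prod.mk_add_mk, Prod.mk.injEq]; constructor <;> ring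
    rw [e]; exact gD
  · have e : ma1 - mc2 = ((2 : ℝ), 2*Real.sqrt 2 - 6) := by
      simp only [ma1, mc2, Prod.mk_sub_mk, Prod.mk_add_mk, Prod.mk.injEq]; constructor <;> ring
    rw [e]; exact gE
  · have e : ma3 - md1 = (2*Real.sqrt 2 - 6, (2 : ℝ)) := by
      simp only [ma3, md1, Prod.mk_sub_mk, Prod.mk_add_mk, Prod.mk.injEq]; constructor <;> ring
    rw [e]; exact gF
  · have e : ma1 - mu = ((-2 : ℝ), 2*Real.sqrt 2 - 6) := by
      simp only [ma1, mu, Prod.mk_sub_mk, Prod.mk_add_mk, Prod.mk.injEq]; constructor <;> ring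
    rw [e]; exact gC
  · have e : mc2 - mu = ((-4 : ℝ), (0:ℝ)) := by
      simp only [mc2, mu, Prod.mk_sub_mk, Prod.mk_add_mk, Prod.mk.injEq]; constructor <;> ring
    rw [e]; exact gA
  · have e : ma3 - mv = (2*Real.sqrt 2 - 6, (-2 : ℝ)) := by
      simp only [ma3, mv, Prod.mk_sub_mk, Prod.mk_add_mk, Prod.mk.injEq]; constructor <;> ring
    rw [e]; exact gD
  · have e : md1 - mv = ((0:ℝ), (-4 : ℝ)) := by
      simp only [md1, mv, Prod.mk_sub_mk, Prod.mk_add_mk, Prod.mk.injEq]; constructor <;> ring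
    rw [e]; exact gB
  · have e : mu - mv = ((2*Real.sqrt 2 : ℝ), (-(2*Real.sqrt 2) : ℝ)) := by
      simp only [mu, mv, Prod.mk_sub_mk, Prod.mk_add_mk, Prod.mk.injEq]; constructor <;> ring
    rw [e]; exact gG
  · rintro ⟨f, h1, h2, h3, h4, h5, h6, h7, h8, h9, h10, h11⟩
    have hu := fin3_tri (f mo) (f ma1) (f mc2) (f mu) h1 h3 h5 h7 h8
    have hv := fin3_tri (f mo) (f ma3) (f md1) (f mv) h2 h4 h6 h9 h10
    exact h11 (hu.trans hv.symm)

end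
end

section
/- For every coloring c : ℝ² → Fin 3 there exist two points x, y ∈ ℝ² such that gauge C₈ (x − y) = 1 and c x = c y. In other words, the chromatic number of the Minkowski plane whose unit circle is the regular octagon is at least 4. -/
noncomputable section

lemma gauge_eq_one_aux_s7 (a b : ℝ) (p : ℝ × ℝ)
    (hmem : p ∈ C8)
    (hb : ∀ v ∈ ({(4, 0), (2 * Real.sqrt 2, 2 * Real.sqrt 2), (0, 4),
     (-(2 * Real.sqrt 2), 2 * Real.sqrt 2), (-4, 0),
     (-(2 * Real.sqrt 2), -(2 * Real.sqrt 2)), (0, -4),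
     (2 * Real.sqrt 2, -(2 * Real.sqrt 2))} : Set (ℝ × ℝ)),
       a * v.1 + b * v.2 ≤ 1)
    (hp : a * p.1 + b * p.2 = 1) :
    gauge C8 p = 1 := by
  have hlin : IsLinearMap ℝ (fun x : ℝ × ℝ => a * x.1 + b * x.2) :=
    ⟨fun x y => by simp [Prod.fst_add, Prod.snd_add]; ring,
     fun c x => by simp [Prod.smul_fst, Prod.smul_snd]; ring⟩
  have hsub : C8 ⊆ {x : ℝ × ℝ | a * x.1 + b * x.2 ≤ 1} :=
    convexHull_min hb (convex_halfSpace_le hlin 1)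
  refine le_antisymm (gauge_le_one_of_mem hmem) ?_
  rw [gauge_def]
  apply le_csInf
  · refine ⟨1, Set.mem_Ioi.mpr one_pos, ?_⟩
    exact Set.mem_smul_set.mpr ⟨p, hmem, one_smul ℝ p⟩
  · rintro r ⟨hr, hmem'⟩
    rw [Set.mem_smul_set] at hmem'
    obtain ⟨q, hq, rfl⟩ := hmem'
    have := hsub hq
    simp only [Set.mem_setOf_eq] at this
    have h1 : a * (r • q).1 + b * (r • q).2 = r * (a * q.1 + b * q.2) := by
      simp [Prod.smul_fst, Prod.smul_snd]; ring
    rw [h1] at hp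
    nlinarith [Set.mem_Ioi.mp hr]

section pts

local notation "s" => Real.sqrt 2

lemma hs0 : (0:ℝ) ≤ s := Real.sqrt_nonneg 2
lemma hs2 : s * s = 2 := Real.mul_self_sqrt (by norm_num)

/-- the vertex set is in C8 -/
lemma vmem_s7 (v : ℝ × ℝ) (hv : v ∈ ({(4, 0), (2 * s, 2 * s), (0, 4),
     (-(2 * s), 2 * s), (-4, 0), (-(2 * s), -(2 * s)), (0, -4),
     (2 * s, -(2 * s))} : Set (ℝ × ℝ))) : v ∈ C8 :=
  subset_convexHull ℝ _ hv

lemma edge_mem (v₁ v₂ p : ℝ × ℝ)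
    (h1 : v₁ ∈ C8) (h2 : v₂ ∈ C8)
    (hp : (1 - s/2) • v₁ + (s/2) • v₂ = p) : p ∈ C8 := by
  have hA : (0:ℝ) ≤ 1 - s/2 := by nlinarith [hs0, hs2]
  have hB : (0:ℝ) ≤ s/2 := by nlinarith [hs0]
  have := (convex_convexHull ℝ _) h1 h2 hA hB (by ring)
  rwa [hp] at this

lemma g1 : gauge C8 ((4:ℝ), (0:ℝ)) = 1 := by
  apply gauge_eq_one_aux_s7 (1/4) ((s-1)/4)
  · exact vmem_s7 _ (by left; rfl)
  · rintro v hv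
    simp only [Set.mem_insert_iff, Set.mem_singleton_iff] at hv
    rcases hv with rfl|rfl|rfl|rfl|rfl|rfl|rfl|rfl <;> simp <;> nlinarith [hs0, hs2]
  · simp

lemma g2 : gauge C8 ((0:ℝ), (4:ℝ)) = 1 := by
  apply gauge_eq_one_aux_s7 ((s-1)/4) (1/4)
  · exact vmem_s7 _ (by right; right; left; rfl)
  · rintro v hv
    simp only [Set.mem_insert_iff, Set.mem_singleton_iff] at hv
    rcases hv with rfl|rfl|rfl|rfl|rfl|rfl|rfl|rfl <;> simp <;> nlinarith [hs0, hs2]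
  · simp

lemma g7 : gauge C8 ((2*s), -(2*s)) = 1 := by
  apply gauge_eq_one_aux_s7 (1/4) (-(s-1)/4)
  · exact vmem_s7 _ (by right;right;right;right;right;right;right; rfl)
  · rintro v hv
    simp only [Set.mem_insert_iff, Set.mem_singleton_iff] at hv
    rcases hv with rfl|rfl|rfl|rfl|rfl|rfl|rfl|rfl <;> simp <;> nlinarith [hs0, hs2]
  · simp; nlinarith [hs2]

lemma g3 : gauge C8 ((2:ℝ), 6 - 2*s) = 1 := by
  apply gauge_eq_one_aux_s7 ((s-1)/4) (1/4)
  · apply edge_mem ((0:ℝ),(4:ℝ)) (2*s, 2*s)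
    · exact vmem_s7 _ (by right; right; left; rfl)
    · exact vmem_s7 _ (by right; left; rfl)
    · simp [Prod.ext_iff, Prod.smul_mk]
      constructor <;> nlinarith [hs2]
  · rintro v hv
    simp only [Set.mem_insert_iff, Set.mem_singleton_iff] at hv
    rcases hv with rfl|rfl|rfl|rfl|rfl|rfl|rfl|rfl <;> simp <;> nlinarith [hs0, hs2]
  · simp; nlinarith [hs2]

lemma g4 : gauge C8 ((2:ℝ), 2*s - 6) = 1 := by
  apply gauge_eq_one_aux_s7 ((s-1)/4) (-1/4)
  · apply edge_mem ((0:ℝ),(-4:ℝ)) (2*s, -(2*s))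
    · exact vmem_s7 _ (by right;right;right;right;right;right; left; rfl)
    · exact vmem_s7 _ (by right;right;right;right;right;right;right; rfl)
    · simp [Prod.ext_iff, Prod.smul_mk]
      constructor <;> nlinarith [hs2]
  · rintro v hv
    simp only [Set.mem_insert_iff, Set.mem_singleton_iff] at hv
    rcases hv with rfl|rfl|rfl|rfl|rfl|rfl|rfl|rfl <;> simp <;> nlinarith [hs0, hs2]
  · simp; nlinarith [hs2]

lemma g5 : gauge C8 ((6 - 2*s), (2:ℝ)) = 1 := by
  apply gauge_eq_one_aux_s7 (1/4) ((s-1)/4)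
  · apply edge_mem ((4:ℝ),(0:ℝ)) (2*s, 2*s)
    · exact vmem_s7 _ (by left; rfl)
    · exact vmem_s7 _ (by right; left; rfl)
    · simp [Prod.ext_iff, Prod.smul_mk]
      constructor <;> nlinarith [hs2]
  · rintro v hv
    simp only [Set.mem_insert_iff, Set.mem_singleton_iff] at hv
    rcases hv with rfl|rfl|rfl|rfl|rfl|rfl|rfl|rfl <;> simp <;> nlinarith [hs0, hs2]
  · simp; nlinarith [hs2]

lemma g6 : gauge C8 ((2*s - 6), (2:ℝ)) = 1 := by
  apply gauge_eq_one_aux_s7 (-1/4) ((s-1)/4)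
  · apply edge_mem ((-4:ℝ),(0:ℝ)) (-(2*s), 2*s)
    · exact vmem_s7 _ (by right;right;right;right; left; rfl)
    · exact vmem_s7 _ (by right;right;right; left; rfl)
    · simp [Prod.ext_iff, Prod.smul_mk]
      constructor <;> nlinarith [hs2]
  · rintro v hv
    simp only [Set.mem_insert_iff, Set.mem_singleton_iff] at hv
    rcases hv with rfl|rfl|rfl|rfl|rfl|rfl|rfl|rfl <;> simp <;> nlinarith [hs0, hs2]
  · simp; nlinarith [hs2]

end pts

theorem octagon_chromatic_ge_four :
    ∀ c : ℝ × ℝ → Fin 3, ∃ x y : ℝ × ℝ, gauge C8 (x - y) = 1 ∧ c x = c y := by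
  intro c
  by_contra hcon
  push_neg at hcon
  set s := Real.sqrt 2 with hsdef
  set A : ℝ × ℝ := (0, 0) with hA
  set B : ℝ × ℝ := (4, 0) with hB
  set C : ℝ × ℝ := (2, 6 - 2*s) with hC
  set D : ℝ × ℝ := (6, 6 - 2*s) with hD
  set E : ℝ × ℝ := (0, 4) with hE
  set F : ℝ × ℝ := (6 - 2*s, 2) with hF
  set G : ℝ × ℝ := (6 - 2*s, 6) with hG
  have hAB : c B ≠ c A := hcon B A (by
    have : B - A = ((4:ℝ), (0:ℝ)) := by simp [hA, hB, Prod.ext_iff]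
    rw [this]; exact g1)
  have hAC : c C ≠ c A := hcon C A (by
    have : C - A = ((2:ℝ), 6 - 2*s) := by simp [hA, hC, Prod.ext_iff]
    rw [this]; exact g3)
  have hBC : c B ≠ c C := hcon B C (by
    have : B - C = ((2:ℝ), 2*s - 6) := by
      simp [hB, hC, Prod.ext_iff, Prod.mk_sub_mk]; ring
    rw [this]; exact g4)
  have hBD : c D ≠ c B := hcon D B (by
    have : D - B = ((2:ℝ), 6 - 2*s) := by
      simp [hB, hD, Prod.ext_iff, Prod.mk_sub_mk]; norm_num
    rw [this]; exact g3)
  have hCD : c D ≠ c C := hcon D C (by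
    have : D - C = ((4:ℝ), (0:ℝ)) := by
      simp [hC, hD, Prod.ext_iff, Prod.mk_sub_mk]; norm_num
    rw [this]; exact g1)
  have hAE : c E ≠ c A := hcon E A (by
    have : E - A = ((0:ℝ), (4:ℝ)) := by simp [hA, hE, Prod.ext_iff]
    rw [this]; exact g2)
  have hAF : c F ≠ c A := hcon F A (by
    have : F - A = ((6 - 2*s), (2:ℝ)) := by simp [hA, hF, Prod.ext_iff]
    rw [this]; exact g5)
  have hEF : c E ≠ c F := hcon E F (by
    have : E - F = ((2*s - 6), (2:ℝ)) := by
      simp [hE, hF, Prod.ext_iff, Prod.mk_sub_mk]; ring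
    rw [this]; exact g6)
  have hEG : c G ≠ c E := hcon G E (by
    have : G - E = ((6 - 2*s), (2:ℝ)) := by
      simp [hE, hG, Prod.ext_iff, Prod.mk_sub_mk]; norm_num
    rw [this]; exact g5)
  have hFG : c G ≠ c F := hcon G F (by
    have : G - F = ((0:ℝ), (4:ℝ)) := by
      simp [hF, hG, Prod.ext_iff, Prod.mk_sub_mk]; norm_num
    rw [this]; exact g2)
  have hDG : c D ≠ c G := hcon D G (by
    have : D - G = ((2*s), -(2*s)) := by
      simp [hD, hG, Prod.ext_iff, Prod.mk_sub_mk]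
    rw [this]; exact g7)
  have key : ∀ x a b c' : Fin 3, a ≠ b → c' ≠ a → c' ≠ b → x ≠ b → x ≠ c' → x = a := by decide
  have h1 : c D = c A := key (c D) (c A) (c B) (c C) (Ne.symm hAB) hAC (Ne.symm hBC) hBD hCD
  have h2 : c G = c A := key (c G) (c A) (c E) (c F) (Ne.symm hAE) hAF (Ne.symm hEF) hEG hFG
  exact hDG (h1.trans h2.symm)

end
end
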